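/- Let φ(t) = (t−1)²(t+α)/t and ψ(t) = (t−1)⁴(t+β)/t² with α ≠ −1, β ≠ −1. If the singular point at t = 1 has Milnor number ≥ 8 (i.e. the curve τ ↦ (φ(1+τ), ψ(1+τ)) has an A₈ singularity at τ = 0), then α = 2 and β = 1/2. -/

import Mathlib

/-! Write `a = α + 1`, `b = β + 1`, so that `x = φ (1 + τ) = τ²(a + τ)/(1 + τ)` and
`y = ψ (1 + τ) = τ⁴(b + τ)/(1 + τ)²`. As `x` vanishes to order 2, modulo `τ⁸` only the cubic
Taylor polynomial `∑ c_k x^k` of `g` matters, and after clearing denominators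
`(1 + τ)³ (y - ∑ c_k x^k)` is a polynomial in `τ` whose coefficients of `τ⁰, …, τ⁷` must vanish.
This linear system in `c₀, …, c₃` is solvable only for `a = 3`, `b = 3/2`. -/

open Filter Topology Finset Function

theorem eq_sum_add_pow_smul_iterate_dslope {𝕜 E : Type*} [NontriviallyNormedField 𝕜]
    [NormedAddCommGroup E] [NormedSpace 𝕜 E] (f : 𝕜 → E) (a b : 𝕜) (n : ℕ) :
    f b = ∑ k ∈ range n, (b - a) ^ k • (swap dslope a)^[k] f a
      + (b - a) ^ n • (swap dslope a)^[n] f b := by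
  induction n with
  | zero => simp
  | succ n ih =>
    rw [ih, sum_range_succ, add_assoc, iterate_succ_apply', swap, pow_succ, mul_smul,
      sub_smul_dslope, smul_sub]
    abel

theorem eq_zero_of_sum_mul_pow_eq_pow_mul {𝕜 : Type*} [NontriviallyNormedField 𝕜] :
    ∀ {n : ℕ} {q : Fin n → 𝕜} {H : 𝕜 → 𝕜}, ContinuousAt H 0 →
      (∀ᶠ τ in 𝓝[≠] 0, ∑ k, q k * τ ^ (k : ℕ) = τ ^ n * H τ) → q = 0
  | 0, q, _, _, _ => Subsingleton.elim q 0
  | n + 1, q, H, hH, h => by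
    have hlow : (fun k => q (Fin.castSucc k)) = 0 := by
      refine eq_zero_of_sum_mul_pow_eq_pow_mul (H := fun τ => τ * H τ - q (Fin.last n))
        (by fun_prop) ?_
      filter_upwards [h] with τ hτ
      rw [Fin.sum_univ_castSucc] at hτ
      simp only [Fin.val_castSucc, Fin.val_last] at hτ
      linear_combination hτ
    have htop : q (Fin.last n) = 0 := by
      have hlim : Tendsto (fun τ => τ * H τ) (𝓝[≠] 0) (𝓝 0) := by
        have : ContinuousAt (fun τ => τ * H τ) 0 := by fun_prop
        simpa using this.tendsto.mono_left nhdsWithin_le_nhds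
      refine tendsto_nhds_unique tendsto_const_nhds (hlim.congr' ?_)
      filter_upwards [h, self_mem_nhdsWithin] with τ hτ hτ0
      simp only [Fin.sum_univ_castSucc, Fin.val_last, Fin.val_castSucc, congrFun hlow,
        Pi.zero_apply, zero_mul, sum_const_zero, zero_add] at hτ
      refine mul_left_cancel₀ (pow_ne_zero n hτ0) ?_
      linear_combination -hτ
    ext k
    induction k using Fin.lastCases with
    | last => exact htop
    | cast k => exact congrFun hlow k

def clearedCoeffs (a b : ℂ) (c : ℕ → ℂ) : Fin 8 → ℂ :=
  ![-c 0, -3 * c 0, -3 * c 0 - a * c 1, -c 0 - (2 * a + 1) * c 1,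
    b - (a + 2) * c 1 - a ^ 2 * c 2, 1 + b - c 1 - (a ^ 2 + 2 * a) * c 2,
    1 - (2 * a + 1) * c 2 - a ^ 3 * c 3, -c 2 - 3 * a ^ 2 * c 3]

theorem sum_clearedCoeffs_mul_pow {a b τ : ℂ} (c : ℕ → ℂ) (R : ℂ) (hτ : 1 + τ ≠ 0) :
    ∑ k, clearedCoeffs a b c k * τ ^ (k : ℕ)
      = (1 + τ) ^ 3 * (τ ^ 4 * (b + τ) / (1 + τ) ^ 2
          - (∑ k ∈ range 4, (τ ^ 2 * (a + τ) / (1 + τ)) ^ k * c k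
            + (τ ^ 2 * (a + τ) / (1 + τ)) ^ 4 * R))
        + τ ^ 8 * ((a + τ) ^ 4 / (1 + τ) * R + c 3 * (3 * a + τ)) := by
  simp only [clearedCoeffs, neg_mul, Fin.sum_univ_eight, Fin.isValue, Matrix.cons_val_zero,
    Fin.coe_ofNat_eq_mod, Nat.zero_mod, pow_zero, mul_one, Matrix.cons_val_one, Nat.one_mod,
    pow_one, Matrix.cons_val, Nat.reduceMod, Nat.mod_succ, sum_range_succ, range_one,
    sum_singleton, one_mul]
  field_simp
  ring

theorem eq_of_clearedCoeffs_eq_zero {a b : ℂ} {c : ℕ → ℂ} (ha : a ≠ 0)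
    (h : clearedCoeffs a b c = 0) : a = 3 ∧ b = 3 / 2 := by
  have e (i : Fin 8) : clearedCoeffs a b c i = 0 := congrFun h i
  have e0 := e 0; have e2 := e 2; have e4 := e 4; have e5 := e 5; have e6 := e 6
  have e7 := e 7
  simp only [clearedCoeffs, neg_mul, Fin.isValue, Matrix.cons_val_zero, neg_eq_zero,
    Matrix.cons_val] at e0 e2 e4 e5 e6 e7
  have hc1 : c 1 = 0 := by simpa [e0, ha] using e2
  have hc2 : 2 * a * c 2 = 1 := by linear_combination e4 - e5 + (a + 1) * hc1
  have hc2' : c 2 = 1 / 6 := by linear_combination -e6 + a / 3 * e7 - 5 / 6 * hc2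
  have ha3 : a = 3 := by linear_combination 3 * hc2 - 6 * a * hc2'
  exact ⟨ha3, by linear_combination e4 + (a + 2) * hc1 + a ^ 2 * hc2' + (a + 3) / 6 * ha3⟩

theorem A8_singularity_forces_case_u (α β : ℂ) (hα : α ≠ -1)
    (φ ψ : ℂ → ℂ)
    (hφ : ∀ t : ℂ, φ t = (t - 1) ^ 2 * (t + α) / t)
    (hψ : ∀ t : ℂ, ψ t = (t - 1) ^ 4 * (t + β) / t ^ 2)
    (hA8 : ∃ g h : ℂ → ℂ, AnalyticAt ℂ g 0 ∧ AnalyticAt ℂ h 0 ∧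
      ∀ᶠ τ in nhds (0 : ℂ), ψ (1 + τ) - g (φ (1 + τ)) = τ ^ 9 * h τ) :
    α = 2 ∧ β = 1 / 2 := by
  obtain ⟨g, h, ⟨p, hp⟩, hh, hgh⟩ := hA8
  set c : ℕ → ℂ := fun k => (swap dslope 0)^[k] g 0
  set r := (swap dslope 0)^[4] g
  have hφc : ContinuousAt (fun τ => φ (1 + τ)) 0 := by
    simp only [hφ]; fun_prop (disch := norm_num)
  have hrφ : ContinuousAt (fun τ => r (φ (1 + τ))) 0 :=
    (hp.has_fpower_series_iterate_dslope_fslope 4).continuousAt.comp_of_eq hφc (by simp [hφ])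
  have hne : ∀ᶠ τ in 𝓝 (0 : ℂ), 1 + τ ≠ 0 :=
    (by fun_prop : ContinuousAt (fun τ : ℂ => 1 + τ) 0).eventually_ne (by norm_num)
  have hc : clearedCoeffs (α + 1) (β + 1) c = 0 := by
    refine eq_zero_of_sum_mul_pow_eq_pow_mul (H := fun τ => (1 + τ) ^ 3 * τ * h τ
      + (α + 1 + τ) ^ 4 / (1 + τ) * r (φ (1 + τ)) + c 3 * (3 * (α + 1) + τ)) ?_ ?_
    · have := hh.continuousAt
      exact .add (.add (by fun_prop) (.mul (by fun_prop (disch := norm_num)) hrφ)) (by fun_prop)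
    filter_upwards [(hgh.and hne).filter_mono nhdsWithin_le_nhds] with τ ⟨hτ, hne⟩
    rw [sum_clearedCoeffs_mul_pow c (r (φ (1 + τ))) hne]
    rw [eq_sum_add_pow_smul_iterate_dslope g 0 _ 4] at hτ
    simp only [hφ, hψ, sub_zero, smul_eq_mul, sum_range_succ, sum_range_zero] at hτ ⊢
    linear_combination (1 + τ) ^ 3 * hτ
  obtain ⟨hα2, hβ2⟩ := eq_of_clearedCoeffs_eq_zero (by contrapose! hα; linear_combination hα) hc
  exact ⟨by linear_combination hα2, by linear_combination hβ2⟩
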